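/- If f : ℂ → ℂ is odd (f(-u) = -f(u)), then the associated shifted factorial satisfies [a-b]_{m+b} = (-1)^b [1-a]_b [a]_m for all a ∈ ℂ and nonnegative integers m, b, where [u]_n = ∏_{i=0}^{n-1} f(u+i). -/
import Mathlib


open Complex Finset

/-- Shifted factorial `[u]_n = ∏_{i=0}^{n-1} f(u+i)` associated to a function `f`. -/
noncomputable def sfac (f : ℂ → ℂ) (u : ℂ) (n : ℕ) : ℂ := ∏ i ∈ Finset.range n, f (u + i)

/-- for odd `f`, `[a-b]_{m+b} = (-1)^b [1-a]_b [a]_m`. -/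
theorem sfac_odd_shift (f : ℂ → ℂ) (hodd : ∀ u : ℂ, f (-u) = -f u)
    (a : ℂ) (m b : ℕ) :
    sfac f (a - b) (m + b) = (-1 : ℂ) ^ b * sfac f (1 - a) b * sfac f a m := by
  unfold sfac
  rw [add_comm m b, Finset.prod_range_add]
  have h1 : ∏ i ∈ Finset.range b, f (a - b + i) =
      (-1 : ℂ) ^ b * ∏ i ∈ Finset.range b, f (1 - a + i) := by
    rw [← Finset.prod_range_reflect (fun i => f (a - b + i)) b]
    have key : ∀ i ∈ Finset.range b, f (a - b + ((b - 1 - i : ℕ) : ℂ)) = (-1) * f (1 - a + i) := by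
      intro i hi
      simp only [Finset.mem_range] at hi
      have heq : (a - (b : ℂ) + ((b - 1 - i : ℕ) : ℂ)) = -(1 - a + i) := by
        have hcast : ((b - 1 - i : ℕ) : ℂ) = (b : ℂ) - 1 - i := by
          have : b - 1 - i = b - (1 + i) := by omega
          rw [this, Nat.cast_sub (by omega : 1 + i ≤ b)]
          push_cast; ring
        rw [hcast]; ring
      rw [heq, hodd]; ring
    rw [Finset.prod_congr rfl key, Finset.prod_mul_distrib, Finset.prod_const,
      Finset.card_range]
  rw [h1]
  have h2 : ∀ i ∈ Finset.range m, f (a - b + (↑(b + i))) = f (a + i) := by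
    intro i _
    congr 1; push_cast; ring
  rw [Finset.prod_congr rfl h2]
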